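/- Let 𝒩 be a nonempty set, k a field of characteristic 0, K = k((ε)), and T a symmetral K-valued mould. Let (U_-, U_+) be the Birkhoff decomposition of T, i.e. the unique pair of K-valued moulds with U_-^∅ = U_+^∅ = 1, U_-^{n̲} ∈ K_- for all nonempty n̲, U_+^{n̲} ∈ K_+ for all n̲, and U_- × T = U_+. Then both U_- and U_+ are symmetral. -/

import Mathlib

/-!
For a mould `M` write `Φ_M(a, b) = ∑ₙ sh^{a,b}_n M^n` and
`D_M(a, b) = Φ_M(a, b) - M^a M^b`. Shuffling is compatible with deconcatenation, so when `T` is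
symmetral, `D_{U × T}(a, b) = ∑ D_U(a₁, b₁) T^{a₂} T^{b₂}` over all splittings `a = a₁a₂`,
`b = b₁b₂`. By induction on `r(a) + r(b)` every term but the top one vanishes, hence
`D_{U₊}(a, b) = D_{U₋}(a, b)`. For nonempty `a`, `b` the left side lies in `K₊` and the right
side in `K₋`, so both vanish. The same identity shows that symmetral moulds are closed under `×`,
which gives the symmetrality of `U₊ = U₋ × T`.
-/

open scoped Classical

/-- Shuffle coefficient: the number of ways the word `n` can be obtained by interleaving
the letters of `a` and `b` while preserving their internal orders. -/
noncomputable def sh {𝒩 : Type*} : List 𝒩 → List 𝒩 → List 𝒩 → ℕ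
  | [], b, n => if b = n then 1 else 0
  | a, [], n => if a = n then 1 else 0
  | _ :: _, _ :: _, [] => 0
  | x :: a, y :: b, z :: n =>
      (if x = z then sh a (y :: b) n else 0) + (if y = z then sh (x :: a) b n else 0)

/-- Mould multiplication: `(M × N)^n = ∑_{n = a b} M^a N^b`. -/
noncomputable def mmul {𝒩 A : Type*} [Semiring A] (M N : List 𝒩 → A) : List 𝒩 → A :=
  fun n => ∑ i ∈ Finset.range (n.length + 1), M (n.take i) * N (n.drop i)

/-- A mould `M` is symmetral if `M^∅ = 1` and
`∑_n sh^{a,b}_n M^n = M^a M^b` for all nonempty words `a`, `b`. -/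
def Symmetral {𝒩 A : Type*} [CommSemiring A] (M : List 𝒩 → A) : Prop :=
  M [] = 1 ∧ ∀ a b : List 𝒩, a ≠ [] → b ≠ [] →
    (∑ᶠ n : List 𝒩, (sh a b n : A) * M n) = M a * M b

/-- Membership in `K_- = ε⁻¹ k[ε⁻¹]`: all coefficients of nonnegative powers vanish
(for Laurent series, this forces a polynomial in `ε⁻¹` with zero constant term). -/
def Kminus {k : Type*} [Field k] (f : LaurentSeries k) : Prop :=
  ∀ n : ℤ, 0 ≤ n → f.coeff n = 0

/-- Membership in `K_+ = k[[ε]]`: all coefficients of negative powers vanish. -/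
def Kplus {k : Type*} [Field k] (f : LaurentSeries k) : Prop :=
  ∀ n : ℤ, n < 0 → f.coeff n = 0

open Finset

section Shuffles

variable {α : Type*}

def shuffles : List α → List α → List (List α)
  | [], b => [b]
  | a, [] => [a]
  | x :: a, y :: b =>
      (shuffles a (y :: b)).map (List.cons x) ++ (shuffles (x :: a) b).map (List.cons y)

theorem length_of_mem_shuffles : ∀ {a b n : List α}, n ∈ shuffles a b →
    n.length = a.length + b.length
  | [], b, n, h => by simp_all [shuffles]
  | _ :: _, [], n, h => by simp_all [shuffles]
  | x :: a, y :: b, n, h => by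
      simp only [shuffles, List.mem_append, List.mem_map] at h
      rcases h with ⟨m, hm, rfl⟩ | ⟨m, hm, rfl⟩
      · simp [length_of_mem_shuffles hm]; omega
      · simp [length_of_mem_shuffles hm]; omega

theorem count_cons_map_cons (x z : α) (n : List α) (S : List (List α)) :
    (S.map (List.cons x)).count (z :: n) = if x = z then S.count n else 0 := by
  split_ifs with h
  · subst h
    exact List.count_map_of_injective _ _ List.cons_injective _
  · exact List.count_eq_zero.2 (by simp [h])

theorem sh_eq_count_shuffles : ∀ a b n : List α, sh a b n = (shuffles a b).count n
  | [], b, n => by rcases eq_or_ne b n with rfl | h <;> simp [sh, shuffles, *]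
  | x :: a, [], n => by
      rcases eq_or_ne (x :: a) n with rfl | h <;> simp [sh, shuffles, *]
  | _ :: _, _ :: _, [] => by
      simp only [sh, shuffles, List.count_append]
      rw [List.count_eq_zero.2 (by simp), List.count_eq_zero.2 (by simp)]
  | x :: a, y :: b, z :: n => by
      simp only [sh, shuffles, List.count_append, count_cons_map_cons, sh_eq_count_shuffles]

end Shuffles

section ShuffleSum

variable {α A : Type*}

def shuffleSum [AddCommMonoid A] (M : List α → A) (a b : List α) : A :=
  ((shuffles a b).map M).sum

section AddCommMonoid

variable [AddCommMonoid A] (M N : List α → A)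

@[simp]
theorem shuffleSum_nil_left (b : List α) : shuffleSum M [] b = M b := by
  simp [shuffleSum, shuffles]

@[simp]
theorem shuffleSum_nil_right (a : List α) : shuffleSum M a [] = M a := by
  cases a <;> simp [shuffleSum, shuffles]

theorem shuffleSum_cons_cons (x y : α) (a b : List α) :
    shuffleSum M (x :: a) (y :: b) =
      shuffleSum (fun l => M (x :: l)) a (y :: b) +
        shuffleSum (fun l => M (y :: l)) (x :: a) b := by
  simp [shuffleSum, shuffles, Function.comp_def]

theorem shuffleSum_add (a b : List α) :
    shuffleSum (fun l => M l + N l) a b = shuffleSum M a b + shuffleSum N a b :=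
  List.sum_map_add

end AddCommMonoid

theorem shuffleSum_const_mul [Semiring A] (c : A) (M : List α → A) (a b : List α) :
    shuffleSum (fun l => c * M l) a b = c * shuffleSum M a b := by
  simp [shuffleSum, List.sum_map_mul_left]

theorem finsum_sh_mul [Semiring A] (M : List α → A) (a b : List α) :
    ∑ᶠ n, (sh a b n : A) * M n = shuffleSum M a b := by
  have hsupp : Function.support (fun n => (sh a b n : A) * M n) ⊆ (shuffles a b).toFinset := by
    intro n hn
    by_contra hmem
    simp_all [sh_eq_count_shuffles, List.count_eq_zero_of_not_mem]
  rw [finsum_eq_sum_of_support_subset _ hsupp, shuffleSum, sum_list_map_count]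
  refine sum_congr rfl fun n _ => ?_
  rw [sh_eq_count_shuffles, nsmul_eq_mul]
  -- the two counts differ only in their (classical) `BEq` instances
  congr!

end ShuffleSum

theorem symmetral_iff {α A : Type*} [CommSemiring A] (M : List α → A) :
    Symmetral M ↔ M [] = 1 ∧ ∀ a b, shuffleSum M a b = M a * M b := by
  refine ⟨fun ⟨h0, h⟩ => ⟨h0, fun a b => ?_⟩, fun ⟨h0, h⟩ => ⟨h0, fun a b _ _ => ?_⟩⟩
  · rcases eq_or_ne a [] with rfl | ha
    · simp [h0]
    rcases eq_or_ne b [] with rfl | hb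
    · simp [h0]
    rw [← finsum_sh_mul, h a b ha hb]
  · rw [finsum_sh_mul, h]

section Deconcatenation

variable {α A : Type*} [Semiring A]

theorem mmul_nil (M N : List α → A) : mmul M N [] = M [] * N [] := by
  simp [mmul]

theorem mmul_cons (M N : List α → A) (z : α) (l : List α) :
    mmul M N (z :: l) = M [] * N (z :: l) + mmul (fun t => M (z :: t)) N l := by
  rw [mmul, List.length_cons, sum_range_succ', add_comm]
  simp [mmul]

def splitSum (F G : List α → List α → A) (a b : List α) : A :=
  ∑ i ∈ range (a.length + 1), ∑ j ∈ range (b.length + 1),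
    F (a.take i) (b.take j) * G (a.drop i) (b.drop j)

variable (F G : List α → List α → A)

theorem splitSum_cons_left (x : α) (a b : List α) :
    splitSum F G (x :: a) b =
      ∑ j ∈ range (b.length + 1), F [] (b.take j) * G (x :: a) (b.drop j) +
      ∑ i ∈ range (a.length + 1), ∑ j ∈ range (b.length + 1),
        F (x :: a.take i) (b.take j) * G (a.drop i) (b.drop j) := by
  rw [splitSum, List.length_cons, sum_range_succ', add_comm]
  simp

theorem splitSum_cons_right (y : α) (a b : List α) :
    splitSum F G a (y :: b) =
      ∑ i ∈ range (a.length + 1), F (a.take i) [] * G (a.drop i) (y :: b) +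
      ∑ i ∈ range (a.length + 1), ∑ j ∈ range (b.length + 1),
        F (a.take i) (y :: b.take j) * G (a.drop i) (b.drop j) := by
  simp_rw [splitSum, List.length_cons, sum_range_succ' _ (b.length + 1),
    ← sum_add_distrib]
  simp [add_comm]

theorem splitSum_cons_cons (x y : α) (a b : List α) :
    splitSum F G (x :: a) (y :: b) =
      F [] [] * G (x :: a) (y :: b) +
      ∑ j ∈ range (b.length + 1), F [] (y :: b.take j) * G (x :: a) (b.drop j) +
      ∑ i ∈ range (a.length + 1), F (x :: a.take i) [] * G (a.drop i) (y :: b) +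
      ∑ i ∈ range (a.length + 1), ∑ j ∈ range (b.length + 1),
        F (x :: a.take i) (y :: b.take j) * G (a.drop i) (b.drop j) := by
  rw [splitSum_cons_left]
  simp only [List.length_cons, sum_range_succ' _ (b.length + 1), sum_add_distrib]
  simp
  abel

theorem splitSum_eq_of_forall_lt_eq_zero {a b : List α}
    (h : ∀ i ≤ a.length, ∀ j ≤ b.length, i + j < a.length + b.length →
      F (a.take i) (b.take j) = 0) :
    splitSum F G a b = F a b * G [] [] := by
  rw [splitSum, sum_eq_single a.length, sum_eq_single b.length]
  · simp
  · intro j hj hne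
    rw [h _ le_rfl _ (by simp at hj; omega) (by simp at hj; omega), zero_mul]
  · simp
  · intro i hi hne
    refine sum_eq_zero fun j hj => ?_
    simp only [mem_range] at hi hj
    rw [h _ (by omega) _ (by omega) (by omega), zero_mul]
  · simp

end Deconcatenation

theorem shuffleSum_mmul {α A : Type*} [Semiring A] : ∀ (M N : List α → A) (a b : List α),
    shuffleSum (mmul M N) a b = splitSum (shuffleSum M) (shuffleSum N) a b
  | M, N, [], b => by simp [splitSum, mmul]
  | M, N, x :: a, [] => by simp [splitSum, mmul]
  | M, N, x :: a, y :: b => by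
      have hx := shuffleSum_mmul (fun t => M (x :: t)) N a (y :: b)
      have hy := shuffleSum_mmul (fun t => M (y :: t)) N (x :: a) b
      rw [splitSum_cons_cons, shuffleSum_cons_cons]
      simp only [mmul_cons, shuffleSum_add, shuffleSum_const_mul, hx, hy, splitSum_cons_left,
        splitSum_cons_right]
      simp [shuffleSum_cons_cons, mul_add, add_mul, sum_add_distrib]
      abel
termination_by _ _ a b => a.length + b.length

theorem mmul_mul_mmul {α A : Type*} [CommSemiring A] (M N : List α → A) (a b : List α) :
    mmul M N a * mmul M N b = splitSum (fun c d => M c * M d) (fun c d => N c * N d) a b := by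
  simp only [mmul, splitSum, sum_mul_sum]
  exact sum_congr rfl fun i _ => sum_congr rfl fun j _ => by ring

section Defect

variable {α A : Type*} [CommRing A]

def shuffleDefect (M : List α → A) (a b : List α) : A :=
  shuffleSum M a b - M a * M b

theorem symmetral_iff_shuffleDefect (M : List α → A) :
    Symmetral M ↔ M [] = 1 ∧ ∀ a b, shuffleDefect M a b = 0 := by
  simp only [symmetral_iff, shuffleDefect, sub_eq_zero]

theorem shuffleDefect_nil_left {M : List α → A} (h0 : M [] = 1) (b : List α) :
    shuffleDefect M [] b = 0 := by
  simp [shuffleDefect, h0]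

theorem shuffleDefect_nil_right {M : List α → A} (h0 : M [] = 1) (a : List α) :
    shuffleDefect M a [] = 0 := by
  simp [shuffleDefect, h0]

theorem shuffleDefect_mmul {N : List α → A} (hN : ∀ c d, shuffleSum N c d = N c * N d)
    (M : List α → A) (a b : List α) :
    shuffleDefect (mmul M N) a b = splitSum (shuffleDefect M) (fun c d => N c * N d) a b := by
  simp only [shuffleDefect, shuffleSum_mmul, mmul_mul_mmul, hN, splitSum, sub_mul,
    sum_sub_distrib]

theorem shuffleDefect_mmul_of_forall_lt_eq_zero {M N : List α → A} (hN : Symmetral N)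
    {a b : List α} (h : ∀ i ≤ a.length, ∀ j ≤ b.length, i + j < a.length + b.length →
      shuffleDefect M (a.take i) (b.take j) = 0) :
    shuffleDefect (mmul M N) a b = shuffleDefect M a b := by
  obtain ⟨hN0, hN⟩ := (symmetral_iff N).1 hN
  rw [shuffleDefect_mmul hN, splitSum_eq_of_forall_lt_eq_zero _ _ h, hN0, mul_one, mul_one]

theorem Symmetral.mmul {M N : List α → A} (hM : Symmetral M) (hN : Symmetral N) :
    Symmetral (mmul M N) := by
  obtain ⟨hM0, hM⟩ := (symmetral_iff_shuffleDefect M).1 hM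
  refine (symmetral_iff_shuffleDefect _).2 ⟨by rw [mmul_nil, hM0, hN.1, mul_one], fun a b => ?_⟩
  rw [shuffleDefect_mmul_of_forall_lt_eq_zero hN fun _ _ _ _ _ => hM _ _, hM]

end Defect

section Laurent

variable (k : Type*) [Field k]

def laurentMinus : NonUnitalSubring (LaurentSeries k) where
  carrier := {f | Kminus f}
  zero_mem' _ _ := HahnSeries.coeff_zero
  add_mem' hf hg n hn := by rw [HahnSeries.coeff_add, hf n hn, hg n hn, add_zero]
  neg_mem' hf n hn := by rw [HahnSeries.coeff_neg, hf n hn, neg_zero]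
  mul_mem' {f g} hf hg n hn := by
    by_contra hne
    obtain ⟨i, hi, j, hj, rfl⟩ :=
      HahnSeries.support_mul_subset ((HahnSeries.mem_support _ _).2 hne)
    have hi' : i < 0 := not_le.1 fun h => hi (hf i h)
    have hj' : j < 0 := not_le.1 fun h => hj (hg j h)
    beta_reduce at hn
    omega

def laurentPlus : Subring (LaurentSeries k) where
  carrier := {f | Kplus f}
  zero_mem' _ _ := HahnSeries.coeff_zero
  one_mem' n hn := by rw [HahnSeries.coeff_one, if_neg hn.ne]
  add_mem' hf hg n hn := by rw [HahnSeries.coeff_add, hf n hn, hg n hn, add_zero]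
  neg_mem' hf n hn := by rw [HahnSeries.coeff_neg, hf n hn, neg_zero]
  mul_mem' {f g} hf hg n hn := by
    by_contra hne
    obtain ⟨i, hi, j, hj, rfl⟩ :=
      HahnSeries.support_mul_subset ((HahnSeries.mem_support _ _).2 hne)
    have hi' : 0 ≤ i := not_lt.1 fun h => hi (hf i h)
    have hj' : 0 ≤ j := not_lt.1 fun h => hj (hg j h)
    beta_reduce at hn
    omega

variable {k}

theorem eq_zero_of_mem_laurentMinus_of_mem_laurentPlus {f : LaurentSeries k}
    (hm : f ∈ laurentMinus k) (hp : f ∈ laurentPlus k) : f = 0 := by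
  ext n
  rcases lt_or_ge n 0 with h | h
  · exact hp n h
  · exact hm n h

end Laurent

section Birkhoff

variable {α k : Type*} [Field k] {M : List α → LaurentSeries k}

theorem shuffleDefect_mem_laurentMinus (hM : ∀ n, n ≠ [] → Kminus (M n)) {a b : List α}
    (ha : a ≠ []) (hb : b ≠ []) : shuffleDefect M a b ∈ laurentMinus k := by
  refine sub_mem (NonUnitalSubring.list_sum_mem _ fun f hf => ?_) (mul_mem (hM a ha) (hM b hb))
  obtain ⟨n, hn, rfl⟩ := List.mem_map.1 hf
  refine hM n fun h => ha (List.eq_nil_of_length_eq_zero ?_)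
  have hlen := length_of_mem_shuffles hn
  rw [h, List.length_nil] at hlen
  omega

theorem shuffleDefect_mem_laurentPlus (hM : ∀ n, Kplus (M n)) (a b : List α) :
    shuffleDefect M a b ∈ laurentPlus k := by
  refine sub_mem (Subring.list_sum_mem _ fun f hf => ?_) (mul_mem (hM a) (hM b))
  obtain ⟨n, -, rfl⟩ := List.mem_map.1 hf
  exact hM n

theorem shuffleDefect_eq_zero_of_birkhoff {T Um Up : List α → LaurentSeries k}
    (hT : Symmetral T) (hUm0 : Um [] = 1) (hUm : ∀ n, n ≠ [] → Kminus (Um n))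
    (hUp : ∀ n, Kplus (Up n)) (hEq : mmul Um T = Up) (a b : List α) :
    shuffleDefect Um a b = 0 := by
  induction hn : a.length + b.length using Nat.strong_induction_on generalizing a b with
  | _ n ih =>
  rcases eq_or_ne a [] with rfl | ha
  · exact shuffleDefect_nil_left hUm0 b
  rcases eq_or_ne b [] with rfl | hb
  · exact shuffleDefect_nil_right hUm0 a
  have hlower : ∀ i ≤ a.length, ∀ j ≤ b.length, i + j < a.length + b.length →
      shuffleDefect Um (a.take i) (b.take j) = 0 := fun i hi j hj hij =>
    ih _ (hn ▸ hij) _ _ (by simp [hi, hj])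
  have hUpUm : shuffleDefect Up a b = shuffleDefect Um a b :=
    hEq ▸ shuffleDefect_mmul_of_forall_lt_eq_zero hT hlower
  exact eq_zero_of_mem_laurentMinus_of_mem_laurentPlus (shuffleDefect_mem_laurentMinus hUm ha hb)
    (hUpUm ▸ shuffleDefect_mem_laurentPlus hUp a b)

end Birkhoff

theorem birkhoff_factors_symmetral
    {𝒩 k : Type*} [Field k]
    (T : List 𝒩 → LaurentSeries k) (hT : Symmetral T)
    (Um Up : List 𝒩 → LaurentSeries k)
    (hUm0 : Um [] = 1)
    (hUm : ∀ n : List 𝒩, n ≠ [] → Kminus (Um n))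
    (hUp : ∀ n : List 𝒩, Kplus (Up n))
    (hEq : mmul Um T = Up) :
    Symmetral Um ∧ Symmetral Up := by
  have hUm_symm : Symmetral Um := (symmetral_iff_shuffleDefect Um).2
    ⟨hUm0, shuffleDefect_eq_zero_of_birkhoff hT hUm0 hUm hUp hEq⟩
  exact ⟨hUm_symm, hEq ▸ hUm_symm.mmul hT⟩
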